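/- arXiv:2602.04045 — 4 statements merged into one kernel-verified Lean document; each statement's English description precedes it below -/
import Mathlib

section
/- For factors φ₁ over variable set 𝐗 and φ₂ over variable set 𝐘, and a set 𝐙 ⊆ 𝐘 of variables with 𝐙 ∩ 𝐗 = ∅, summing out 𝐙 distributes over the factor product: ∑_𝐙 (φ₁ ⊙ φ₂) = φ₁ ⊙ (∑_𝐙 φ₂). -/
open Finset

/-- A factor over a set `S` of variables: a function on total instantiations
that only depends on the values of the variables in `S`. -/
def FDependsOn {V : Type*} {Val : V → Type*}
    (φ : (∀ v, Val v) → NNReal) (S : Finset V) : Prop :=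
  ∀ a b : ∀ v, Val v, (∀ v ∈ S, a v = b v) → φ a = φ b

/-- Summing out the variables in `Z` from a factor. -/
def fsumOut {V : Type*} [DecidableEq V] {Val : V → Type*} [∀ v, Fintype (Val v)]
    (Z : Finset V) (φ : (∀ v, Val v) → NNReal) : (∀ v, Val v) → NNReal :=
  fun a => ∑ z : (∀ v : Z, Val v), φ (fun v => if h : v ∈ Z then z ⟨v, h⟩ else a v)

theorem FDependsOn.apply_dite_of_disjoint {V : Type*} [DecidableEq V] {Val : V → Type*}
    {φ : (∀ v, Val v) → NNReal} {S Z : Finset V} (hφ : FDependsOn φ S) (hZS : Disjoint Z S)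
    (a : ∀ v, Val v) (z : ∀ v : Z, Val v) :
    φ (fun v => if h : v ∈ Z then z ⟨v, h⟩ else a v) = φ a :=
  hφ _ _ fun v hv => by simp [disjoint_right.mp hZS hv]

theorem fsumOut_mul_left_of_disjoint {V : Type*} [DecidableEq V] {Val : V → Type*}
    [∀ v, Fintype (Val v)] {φ₁ : (∀ v, Val v) → NNReal} {X Z : Finset V}
    (h₁ : FDependsOn φ₁ X) (hZX : Disjoint Z X) (φ₂ : (∀ v, Val v) → NNReal)
    (a : ∀ v, Val v) :
    fsumOut Z (fun b => φ₁ b * φ₂ b) a = φ₁ a * fsumOut Z φ₂ a := by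
  rw [fsumOut, fsumOut, mul_sum]
  exact sum_congr rfl fun z _ => by rw [h₁.apply_dite_of_disjoint hZX]

theorem sumOut_mul_distrib_general {V : Type*} [DecidableEq V] {Val : V → Type*}
    [∀ v, Fintype (Val v)] (X Z : Finset V)
    (φ₁ φ₂ : (∀ v, Val v) → NNReal)
    (h₁ : FDependsOn φ₁ X) (hZX : Disjoint Z X) :
    fsumOut Z (fun a => φ₁ a * φ₂ a) = fun a => φ₁ a * fsumOut Z φ₂ a :=
  funext (fsumOut_mul_left_of_disjoint h₁ hZX φ₂)

/-- Summing out `Z ⊆ Y` with `Z ∩ X = ∅` distributes over the factor product. -/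
theorem sumOut_mul_distrib {V : Type*} [DecidableEq V] {Val : V → Type*}
    [∀ v, Fintype (Val v)] (X Y Z : Finset V)
    (φ₁ φ₂ : (∀ v, Val v) → NNReal)
    (h₁ : FDependsOn φ₁ X) (h₂ : FDependsOn φ₂ Y)
    (hZY : Z ⊆ Y) (hZX : Disjoint Z X) :
    fsumOut Z (fun a => φ₁ a * φ₂ a) = fun a => φ₁ a * fsumOut Z φ₂ a :=
  sumOut_mul_distrib_general X Z φ₁ φ₂ h₁ hZX
end

section
/- Suppose φ₁ is a factor over 𝐗₁ = 𝐘₁ ⊎ 𝐖₁ and φ₂ is a factor over 𝐗₂ = 𝐘₂ ⊎ 𝐖₂, with 𝐖₁ ∩ 𝐗₂ = ∅ and 𝐖₂ ∩ 𝐗₁ = ∅. Then (∑_{𝐖₁} φ₁) ⊙ (∑_{𝐖₂} φ₂) = ∑_{𝐖₁ ∪ 𝐖₂} (φ₁ ⊙ φ₂), both being factors over 𝐘₁ ∪ 𝐘₂. -/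
/-!
Summing out `W₁ ∪ W₂` is summing out `W₂` and then `W₁`, because an instantiation of the
disjoint union is a pair of instantiations. Since `φ₁` ignores `W₂`, it comes out of the sum over
`W₂`; since `∑_{W₂} φ₂` depends only on `Y₂`, it comes out of the sum over `W₁`.
-/

open Finset

section FactorAlgebra

open Function

variable {V : Type*} {Val : V → Type*}

theorem FDependsOn.dependsOn {φ : (∀ v, Val v) → NNReal} {S : Finset V} (h : FDependsOn φ S) :
    DependsOn φ S :=
  fun a b hab => h a b hab

theorem FDependsOn.apply_updateFinset [DecidableEq V] {ψ : (∀ v, Val v) → NNReal}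
    {S Z : Finset V} (h : FDependsOn ψ S) (hSZ : Disjoint S Z) (a : ∀ v, Val v)
    (z : ∀ v : Z, Val v) : ψ (updateFinset a Z z) = ψ a :=
  h _ _ fun _ hv => dif_neg (disjoint_left.mp hSZ hv)

variable [DecidableEq V] [∀ v, Fintype (Val v)]

theorem fsumOut_apply (Z : Finset V) (φ : (∀ v, Val v) → NNReal) (a : ∀ v, Val v) :
    fsumOut Z φ a = ∑ z : (∀ v : Z, Val v), φ (updateFinset a Z z) :=
  rfl

theorem FDependsOn.fsumOut {φ : (∀ v, Val v) → NNReal} {S : Finset V} (h : FDependsOn φ S)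
    (Z : Finset V) : FDependsOn (fsumOut Z φ) (S \ Z) := fun a b hab =>
  Finset.sum_congr rfl fun z _ => h.dependsOn.updateFinset z (by simpa using hab)

theorem fsumOut_union {Z₁ Z₂ : Finset V} (h : Disjoint Z₁ Z₂) (φ : (∀ v, Val v) → NNReal) :
    fsumOut (Z₁ ∪ Z₂) φ = fsumOut Z₁ (fsumOut Z₂ φ) := by
  funext a
  simp only [fsumOut_apply, updateFinset_updateFinset h]
  rw [← (Equiv.piFinsetUnion Val h).sum_comp, Fintype.sum_prod_type]

theorem fsumOut_mul_left {ψ : (∀ v, Val v) → NNReal} {S Z : Finset V} (hψ : FDependsOn ψ S)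
    (hSZ : Disjoint S Z) (φ : (∀ v, Val v) → NNReal) :
    fsumOut Z (fun a => ψ a * φ a) = fun a => ψ a * fsumOut Z φ a := by
  funext a
  simp only [fsumOut_apply, hψ.apply_updateFinset hSZ, Finset.mul_sum]

theorem fsumOut_mul_right {ψ : (∀ v, Val v) → NNReal} {S Z : Finset V} (hψ : FDependsOn ψ S)
    (hSZ : Disjoint S Z) (φ : (∀ v, Val v) → NNReal) :
    fsumOut Z (fun a => φ a * ψ a) = fun a => fsumOut Z φ a * ψ a := by
  funext a
  simp only [fsumOut_apply, hψ.apply_updateFinset hSZ, Finset.sum_mul]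

end FactorAlgebra

theorem sumOut_fprod_general {V : Type*} [DecidableEq V] {Val : V → Type*}
    [∀ v, Fintype (Val v)] (Y₁ W₁ Y₂ W₂ : Finset V)
    (φ₁ φ₂ : (∀ v, Val v) → NNReal)
    (h₁ : FDependsOn φ₁ (Y₁ ∪ W₁)) (h₂ : FDependsOn φ₂ (Y₂ ∪ W₂))
    (hW₁ : Disjoint W₁ (Y₂ ∪ W₂)) (hW₂ : Disjoint W₂ (Y₁ ∪ W₁)) :
    (fun a => fsumOut W₁ φ₁ a * fsumOut W₂ φ₂ a)
      = fsumOut (W₁ ∪ W₂) (fun a => φ₁ a * φ₂ a) := by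
  have hW : Disjoint W₁ W₂ := hW₁.mono_right subset_union_right
  have hφ₂W₁ : Disjoint ((Y₂ ∪ W₂) \ W₂) W₁ := (hW₁.mono_right sdiff_subset).symm
  rw [fsumOut_union hW, fsumOut_mul_left h₁ hW₂.symm, fsumOut_mul_right (h₂.fsumOut W₂) hφ₂W₁]

/-- Key compositionality identity:
`(∑_{W₁} φ₁) ⊙ (∑_{W₂} φ₂) = ∑_{W₁ ∪ W₂} (φ₁ ⊙ φ₂)`. -/
theorem sumOut_fprod {V : Type*} [DecidableEq V] {Val : V → Type*}
    [∀ v, Fintype (Val v)] (Y₁ W₁ Y₂ W₂ : Finset V)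
    (φ₁ φ₂ : (∀ v, Val v) → NNReal)
    (h₁ : FDependsOn φ₁ (Y₁ ∪ W₁)) (h₂ : FDependsOn φ₂ (Y₂ ∪ W₂))
    (hd₁ : Disjoint Y₁ W₁) (hd₂ : Disjoint Y₂ W₂)
    (hW₁ : Disjoint W₁ (Y₂ ∪ W₂)) (hW₂ : Disjoint W₂ (Y₁ ∪ W₁)) :
    (fun a => fsumOut W₁ φ₁ a * fsumOut W₂ φ₂ a)
      = fsumOut (W₁ ∪ W₂) (fun a => φ₁ a * φ₂ a) :=
  sumOut_fprod_general Y₁ W₁ Y₂ W₂ φ₁ φ₂ h₁ h₂ hW₁ hW₂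
end

section
/- If a Bayesian Network over variables 𝐗 assigns to each X ∈ 𝐗 a CPT φ^X over {X} ∪ Pa(X) (Pa(X) the parents of X in the DAG), then the product ⨀_{X ∈ 𝐗} φ^X is a probability distribution over 𝐗, i.e., its values sum to 1. -/
open Finset

/-- Equivalence splitting off the inserted element from a pi type over a
finset. -/
def insertSubtypePiEquiv {α : Type*} [DecidableEq α] {Val : α → Type*}
    {s : Finset α} {a : α} (ha : a ∉ s) :
    (∀ v : (insert a s : Finset α), Val v) ≃ Val a × (∀ v : s, Val v) where
  toFun z := (z ⟨a, mem_insert_self a s⟩, fun v => z ⟨v, mem_insert_of_mem v.2⟩)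
  invFun p := fun v =>
    if h : (v : α) ∈ s then p.2 ⟨v, h⟩
    else cast (congrArg Val ((mem_insert.mp v.2).resolve_right h).symm) p.1
  left_inv z := by
    funext v
    obtain ⟨v, hv⟩ := v
    by_cases h : v ∈ s
    · simp [h]
    · have hva : v = a := (mem_insert.mp hv).resolve_right h
      subst hva
      simp [h]
  right_inv p := by
    obtain ⟨x, z⟩ := p
    refine Prod.ext ?_ ?_
    · simp [ha]
    · funext v
      simp [v.2]

theorem key_sum {V : Type*} [Fintype V] [DecidableEq V]
    [LinearOrder V] {Val : V → Type*} [∀ v, Fintype (Val v)]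
    (Pa : V → Finset V) (hPa : ∀ v, ∀ u ∈ Pa v, u < v)
    (φ : V → (∀ v, Val v) → NNReal)
    (hdep : ∀ v, FDependsOn (φ v) (insert v (Pa v)))
    (hcpt : ∀ v (a : ∀ u, Val u), ∑ x : Val v, φ v (Function.update a v x) = 1)
    (S : Finset V) :
    ∀ a : ∀ v, Val v,
      ∑ z : (∀ v : S, Val v),
        ∏ v ∈ S, φ v (fun u => if h : u ∈ S then z ⟨u, h⟩ else a u) = 1 := by
  induction S using Finset.strongInduction with
  | _ S ih =>
    intro a
    rcases eq_empty_or_nonempty S with rfl | hS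
    · simp
    · obtain ⟨m, T, hmT, hlt, rfl⟩ :
          ∃ m T, m ∉ T ∧ (∀ v ∈ T, v < m) ∧ S = insert m T := by
        refine ⟨S.max' hS, S.erase (S.max' hS), notMem_erase _ S, ?_, ?_⟩
        · exact fun v hv => lt_of_le_of_ne (S.le_max' v (mem_of_mem_erase hv))
            (ne_of_mem_erase hv)
        · rw [insert_erase (S.max'_mem hS)]
      have hTsub : T ⊂ insert m T := ssubset_insert hmT
      rw [← (insertSubtypePiEquiv (Val := Val) hmT).symm.sum_comp]
      rw [Fintype.sum_prod_type]
      rw [Finset.sum_comm]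
      -- define the base assignment from z' : pi over T
      have main : ∀ z' : (∀ v : T, Val v),
          ∑ x : Val m,
            ∏ v ∈ insert m T,
              φ v (fun u => if h : u ∈ insert m T then
                ((insertSubtypePiEquiv (Val := Val) hmT).symm (x, z')) ⟨u, h⟩ else a u)
            = ∏ v ∈ T, φ v (fun u => if h : u ∈ T then z' ⟨u, h⟩ else a u) := by
        intro z'
        set c : ∀ v, Val v := fun u => if h : u ∈ T then z' ⟨u, h⟩ else a u with hc
        have hb : ∀ x : Val m,
            (fun u => if h : u ∈ insert m T then
                ((insertSubtypePiEquiv (Val := Val) hmT).symm (x, z')) ⟨u, h⟩ else a u)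
            = Function.update c m x := by
          intro x
          funext u
          by_cases hum : u = m
          · subst hum
            simp [insertSubtypePiEquiv, hmT, Function.update_self]
          · rw [Function.update_of_ne hum]
            by_cases huT : u ∈ T
            · simp [insertSubtypePiEquiv, mem_insert, huT, hc]
            · have : u ∉ insert m T := by simp [hum, huT]
              simp [this, hc, huT]
        have step : ∀ x : Val m,
            ∏ v ∈ insert m T, φ v (Function.update c m x)
              = φ m (Function.update c m x) * ∏ v ∈ T, φ v c := by
          intro x
          rw [Finset.prod_insert hmT]
          congr 1
          refine Finset.prod_congr rfl fun v hv => ?_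
          refine hdep v _ _ fun u hu => ?_
          have hum : u ≠ m := by
            rcases mem_insert.mp hu with h1 | h1
            · exact h1 ▸ ne_of_lt (hlt v hv)
            · exact ne_of_lt ((hPa v u h1).trans (hlt v hv))
          rw [Function.update_of_ne hum]
        calc ∑ x : Val m,
            ∏ v ∈ insert m T,
              φ v (fun u => if h : u ∈ insert m T then
                ((insertSubtypePiEquiv (Val := Val) hmT).symm (x, z')) ⟨u, h⟩ else a u)
            = ∑ x : Val m, φ m (Function.update c m x) * ∏ v ∈ T, φ v c := by
              refine Finset.sum_congr rfl fun x _ => ?_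
              rw [hb x, step x]
          _ = (∑ x : Val m, φ m (Function.update c m x)) * ∏ v ∈ T, φ v c := by
              rw [Finset.sum_mul]
          _ = ∏ v ∈ T, φ v c := by rw [hcpt m c, one_mul]
      calc (∑ z' : (∀ v : T, Val v), ∑ x : Val m,
              ∏ v ∈ insert m T,
                φ v (fun u => if h : u ∈ insert m T then
                  ((insertSubtypePiEquiv (Val := Val) hmT).symm (x, z')) ⟨u, h⟩ else a u))
          = ∑ z' : (∀ v : T, Val v),
              ∏ v ∈ T, φ v (fun u => if h : u ∈ T then z' ⟨u, h⟩ else a u) := by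
            exact Finset.sum_congr rfl fun z' _ => main z'
        _ = 1 := ih T hTsub a

/-- Pearl's theorem: the product of the CPTs of a Bayesian Network is a
probability distribution (sums to 1). -/
theorem bn_product_is_distribution {V : Type*} [Fintype V] [DecidableEq V]
    [LinearOrder V] {Val : V → Type*} [∀ v, Fintype (Val v)]
    [∀ v, Nonempty (Val v)]
    (Pa : V → Finset V) (hPa : ∀ v, ∀ u ∈ Pa v, u < v)
    (φ : V → (∀ v, Val v) → NNReal)
    (hdep : ∀ v, FDependsOn (φ v) (insert v (Pa v)))
    (hcpt : ∀ v (a : ∀ u, Val u), ∑ x : Val v, φ v (Function.update a v x) = 1) :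
    ∑ a : ∀ v, Val v, ∏ v : V, φ v a = 1 := by
  have a₀ : ∀ v, Val v := fun v => Classical.arbitrary (Val v)
  have h := key_sum Pa hPa φ hdep hcpt Finset.univ a₀
  rw [← h]
  refine Fintype.sum_bijective
    (fun (b : ∀ v, Val v) => (fun v : (univ : Finset V) => b v : ∀ v : (univ : Finset V), Val v))
    ?_ _ _ ?_
  · constructor
    · intro b1 b2 hbb
      funext v
      exact congrFun hbb ⟨v, mem_univ v⟩
    · intro z
      exact ⟨fun v => z ⟨v, mem_univ v⟩, rfl⟩
  · intro b
    refine Finset.prod_congr rfl fun v _ => ?_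
    congr 1
    funext u
    simp
end

section
/- Variable-elimination correctness (one step): let φ₁, …, φₙ be factors over variable sets 𝐗₁, …, 𝐗ₙ and let X be a variable. Let I = {i : X ∈ 𝐗ᵢ} and J its complement. Then ∑_X (⨀ᵢ φᵢ) = (⨀_{j ∈ J} φⱼ) ⊙ (∑_X ⨀_{i ∈ I} φᵢ). -/
open Finset

namespace FDependsOn

variable {V : Type*} {Val : V → Type*}

theorem prod [DecidableEq V] {ι : Type*} {s : Finset ι} {XS : ι → Finset V}
    {φ : ι → (∀ v, Val v) → NNReal} (hdep : ∀ i ∈ s, FDependsOn (φ i) (XS i)) :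
    FDependsOn (fun a => ∏ i ∈ s, φ i a) (s.biUnion XS) := fun a b hab =>
  prod_congr rfl fun i hi =>
    hdep i hi a b fun v hv => hab v (mem_biUnion.2 ⟨i, hi, hv⟩)

theorem apply_dite_eq_of_disjoint {φ : (∀ v, Val v) → NNReal} {S Z : Finset V}
    [DecidablePred (· ∈ Z)] (hφ : FDependsOn φ S) (hZS : Disjoint Z S)
    (z : ∀ v : Z, Val v) (a : ∀ v, Val v) :
    φ (fun v => if h : v ∈ Z then z ⟨v, h⟩ else a v) = φ a :=
  hφ _ _ fun _ hv => dif_neg (disjoint_right.1 hZS hv)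

end FDependsOn

theorem fsumOut_mul_left_of_dependsOn {V : Type*} [DecidableEq V] {Val : V → Type*}
    [∀ v, Fintype (Val v)] {Z S : Finset V} {ψ : (∀ v, Val v) → NNReal}
    (hψ : FDependsOn ψ S) (hZS : Disjoint Z S) (φ : (∀ v, Val v) → NNReal) :
    fsumOut Z (fun a => ψ a * φ a) = fun a => ψ a * fsumOut Z φ a := by
  funext a
  simp only [fsumOut, mul_sum, hψ.apply_dite_eq_of_disjoint hZS]

/-- Variable elimination, one step: the sum over `X` need only be distributed
over the factors mentioning `X`. -/
theorem variable_elimination_step {V : Type*} [DecidableEq V] {Val : V → Type*}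
    [∀ v, Fintype (Val v)] (n : ℕ) (XS : Fin n → Finset V)
    (φ : Fin n → ((∀ v, Val v) → NNReal)) (x₀ : V)
    (hdep : ∀ i, FDependsOn (φ i) (XS i)) :
    fsumOut {x₀} (fun a => ∏ i : Fin n, φ i a)
      = fun a =>
          (∏ i ∈ Finset.univ.filter (fun i => x₀ ∉ XS i), φ i a)
          * fsumOut {x₀}
              (fun b => ∏ i ∈ Finset.univ.filter (fun i => x₀ ∈ XS i), φ i b) a := by
  have hJ : Disjoint {x₀} ((univ.filter fun i => x₀ ∉ XS i).biUnion XS) := by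
    simp [disjoint_singleton_left]
  rw [← fsumOut_mul_left_of_dependsOn (FDependsOn.prod fun i _ => hdep i) hJ]
  simp_rw [prod_filter_not_mul_prod_filter]
end
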